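/- For every real q with 1 < q < 2 and every x in [0,1], the function U(x) = 2^q·x + (1-x)^q - (1+x)^q is nonpositive. -/

import Mathlib

open Real Set

/-!
`g(t) = (1 + t)^q - (1 - t)^q` is concave on `[0, 1]` when `1 ≤ q ≤ 2`, because
`g''(t) = q (q - 1) ((1 + t)^(q-2) - (1 - t)^(q-2))` and `s ↦ s^(q-2)` is antitone on `(0, ∞)`
while `1 - t ≤ 1 + t`.
So `g` lies above its chord from `g(0) = 0` to `g(1) = 2^q`, which is `2^q x ≤ g(x)`.
-/

lemma hasDerivAt_one_add_rpow (p : ℝ) {t : ℝ} (ht : 0 < 1 + t) :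
    HasDerivAt (fun s : ℝ => (1 + s) ^ p) (p * (1 + t) ^ (p - 1)) t :=
  (((hasDerivAt_id' t).const_add 1).rpow_const (Or.inl ht.ne')).congr_deriv (by ring)

lemma hasDerivAt_one_sub_rpow (p : ℝ) {t : ℝ} (ht : 0 < 1 - t) :
    HasDerivAt (fun s : ℝ => (1 - s) ^ p) (-(p * (1 - t) ^ (p - 1))) t :=
  (((hasDerivAt_id' t).const_sub 1).rpow_const (Or.inl ht.ne')).congr_deriv (by ring)

lemma concaveOn_one_add_rpow_sub_one_sub_rpow {q : ℝ} (hq1 : 1 ≤ q) (hq2 : q ≤ 2) :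
    ConcaveOn ℝ (Icc 0 1) (fun t : ℝ => (1 + t) ^ q - (1 - t) ^ q) := by
  have hq0 : 0 ≤ q := by linarith
  refine concaveOn_of_hasDerivWithinAt2_nonpos (convex_Icc 0 1)
    (f' := fun t => q * (1 + t) ^ (q - 1) + q * (1 - t) ^ (q - 1))
    (f'' := fun t => q * (q - 1) * ((1 + t) ^ (q - 2) - (1 - t) ^ (q - 2)))
    (by fun_prop (disch := exact hq0)) ?_ ?_ ?_ <;>
    intro t ht <;> rw [interior_Icc] at ht <;>
    obtain ⟨h_add, h_sub⟩ : 0 < 1 + t ∧ 0 < 1 - t := ⟨by linarith [ht.1], by linarith [ht.2]⟩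
  · exact ((hasDerivAt_one_add_rpow q h_add).sub
      (hasDerivAt_one_sub_rpow q h_sub)).hasDerivWithinAt.congr_deriv (by ring)
  · refine (((hasDerivAt_one_add_rpow (q - 1) h_add).const_mul q).add
      ((hasDerivAt_one_sub_rpow (q - 1) h_sub).const_mul q)).hasDerivWithinAt.congr_deriv ?_
    rw [show q - 1 - 1 = q - 2 by ring]
    ring
  · have hle : (1 + t) ^ (q - 2) ≤ (1 - t) ^ (q - 2) :=
      rpow_le_rpow_of_nonpos h_sub (by linarith [ht.1]) (by linarith)
    exact mul_nonpos_of_nonneg_of_nonpos (mul_nonneg hq0 (by linarith)) (sub_nonpos.2 hle)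

/-- For `1 < q < 2` and `x ∈ [0,1]`, `U(x) = 2^q·x + (1-x)^q - (1+x)^q ≤ 0`. -/
theorem U_nonpos (q x : ℝ) (hq1 : 1 < q) (hq2 : q < 2) (hx0 : 0 ≤ x) (hx1 : x ≤ 1) :
    (2 : ℝ) ^ q * x + (1 - x) ^ q - (1 + x) ^ q ≤ 0 := by
  have chord := (concaveOn_one_add_rpow_sub_one_sub_rpow hq1.le hq2.le).2
    (left_mem_Icc.2 zero_le_one) (right_mem_Icc.2 zero_le_one)
    (sub_nonneg.2 hx1) hx0 (sub_add_cancel 1 x)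
  norm_num [zero_rpow (by linarith : q ≠ 0)] at chord
  linarith
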